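/- arXiv:math/9904103 — 3 statements merged into one kernel-verified Lean document; each statement's English description precedes it below -/
import Mathlib

section
/- For every n ≥ 1 and all α, β, α', i_1, ..., i_n ∈ I, the commutator of a transition number operator with the adjoint Y-operator satisfies [N_{αβ}, (Y_{α', i_1, ..., i_n})†] = Σ_{l=1}^{n} δ_{β, i_l} (Y_{α', i_1, ..., i_{l−1}, α, i_{l+1}, ..., i_n})† + δ_{β, α'} (Y_{α, i_1, ..., i_n})†, where the l-th summand replaces the index i_l by α. -/
/-- The adjoint Y-operators `(Y_{k, i₁, …, iₙ})†`, defined recursively by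
`(Y_{k,i})† = b†_i b†_k − q b†_k b†_i` and
`(Y_{k, i₁, …, i_{n+1}})† = b†_{i_{n+1}} (Y_{k, i₁, …, iₙ})† − q^{n+1} (Y_{k, i₁, …, iₙ})† b†_{i_{n+1}}`.
The index tuple `(i₁, …, iₙ)` is stored as the list `[iₙ, …, i₁]` (latest index first),
so that the recursion is structural. -/
def Ydag {A : Type*} [Ring A] [Algebra ℝ A] {I : Type*}
    (q : ℝ) (bd : I → A) (k : I) : List I → A
  | [] => 0
  | [i] => bd i * bd k - q • (bd k * bd i)
  | i :: j :: L =>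
      bd i * Ydag q bd k (j :: L) - q ^ (L.length + 2) • (Ydag q bd k (j :: L) * bd i)

lemma quon_comm_expand {A : Type*} [Ring A] [Algebra ℝ A] (N x y : A) (r : ℝ) :
    N * (x * y - r • (y * x)) - (x * y - r • (y * x)) * N
      = (N * x - x * N) * y + x * (N * y - y * N)
        - r • ((N * y - y * N) * x + y * (N * x - x * N)) := by
  simp only [mul_sub, sub_mul, smul_sub, smul_add, mul_smul_comm, smul_mul_assoc, mul_assoc]
  abel

lemma Ydag_cons {A : Type*} [Ring A] [Algebra ℝ A] {I : Type*}
    (q : ℝ) (bd : I → A) (k i : I) (M : List I) (hM : M ≠ []) :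
    Ydag q bd k (i :: M)
      = bd i * Ydag q bd k M - q ^ (M.length + 1) • (Ydag q bd k M * bd i) := by
  cases M with
  | nil => exact absurd rfl hM
  | cons j K => simp [Ydag]

/-- For every n ≥ 1 and all α, β, α', i₁, …, iₙ ∈ I,
`[N_{αβ}, (Y_{α', i₁, …, iₙ})†]
  = Σ_{l=1}^{n} δ_{β, i_l} (Y_{α', i₁, …, α, …, iₙ})† + δ_{β, α'} (Y_{α, i₁, …, iₙ})†`,
where the l-th summand replaces the index `i_l` by `α`. -/
theorem quon_comm_N_Ydag
    {A : Type*} [Ring A] [Algebra ℝ A] {I : Type*} [DecidableEq I]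
    (q : ℝ) (b bd : I → A) (N : I → I → A)
    (hNbd : ∀ α β μ : I, N α β * bd μ - bd μ * N α β = if β = μ then bd α else 0)
    (hNb : ∀ α β μ : I, N α β * b μ - b μ * N α β = -(if α = μ then b β else 0))
    (α β α' : I) (L : List I) (hL : L ≠ []) :
    N α β * Ydag q bd α' L - Ydag q bd α' L * N α β =
      (∑ l : Fin L.length, if β = L.get l then Ydag q bd α' (L.set l α) else 0)
        + (if β = α' then Ydag q bd α L else 0) := by
  induction L with
  | nil => exact absurd rfl hL
  | cons i M ih =>
    cases M with
    | nil =>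
      simp only [Ydag, List.length_singleton, Fin.sum_univ_one, List.get, List.set,
        Fin.val_zero]
      rw [quon_comm_expand, hNbd, hNbd]
      split_ifs <;> simp [smul_sub] <;> abel
    | cons j K =>
      have hM : (j :: K : List I) ≠ [] := by simp
      have key : ∀ l : Fin (K.length + 1),
          Ydag q bd α' (i :: (j :: K).set (↑l) α)
            = bd i * Ydag q bd α' ((j :: K).set (↑l) α)
              - q ^ (K.length + 1 + 1) • (Ydag q bd α' ((j :: K).set (↑l) α) * bd i) := by
        intro l
        rw [Ydag_cons q bd α' i _ (by simp), List.length_set, List.length_cons]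
      rw [Ydag_cons q bd α' i _ hM, quon_comm_expand, hNbd, ih hM]
      simp only [List.length_cons]
      conv_rhs => rw [Fin.sum_univ_succ]
      simp only [List.get_cons_succ', List.get_cons_zero, Fin.val_succ, Fin.val_zero,
        List.set_cons_zero, List.set_cons_succ, key,
        Ydag_cons q bd α' α _ hM, Ydag_cons q bd α i _ hM, List.length_cons]
      have hS : (∑ l : Fin (K.length + 1),
            if β = (j :: K).get l then
              bd i * Ydag q bd α' ((j :: K).set (↑l) α)
                - q ^ (K.length + 1 + 1) • (Ydag q bd α' ((j :: K).set (↑l) α) * bd i)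
            else 0)
          = bd i * (∑ l : Fin (K.length + 1),
                if β = (j :: K).get l then Ydag q bd α' ((j :: K).set (↑l) α) else 0)
            - q ^ (K.length + 1 + 1) • ((∑ l : Fin (K.length + 1),
                if β = (j :: K).get l then Ydag q bd α' ((j :: K).set (↑l) α) else 0) * bd i) := by
        rw [Finset.mul_sum, Finset.sum_mul, Finset.smul_sum, ← Finset.sum_sub_distrib]
        refine Finset.sum_congr rfl fun l _ => ?_
        split_ifs <;> simp
      rw [hS]
      generalize Ydag q bd α' (j :: K) = Y
      generalize Ydag q bd α (j :: K) = Z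
      generalize (∑ l : Fin (K.length + 1),
          if β = (j :: K).get l then Ydag q bd α' ((j :: K).set (↑l) α) else 0) = S
      split_ifs <;>
        simp only [smul_add, smul_sub, mul_add, add_mul, mul_zero, zero_mul, mul_sub, sub_mul,
          smul_zero, mul_smul_comm, smul_mul_assoc, zero_add, add_zero, sub_zero, zero_sub] <;>
        abel
end

section
/- For all α, β, α', β' ∈ I, the element M := [N_{αβ}, N_{α'β'}] − δ_{β,α'} N_{αβ'} + δ_{α,β'} N_{α'β} commutes with every element of the subalgebra of A generated by the set {b_μ : μ ∈ I} ∪ {b†_μ : μ ∈ I}. -/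
lemma quon_aux {A : Type*} [Ring A] (C C' P Q z u u' p q : A)
    (hu : C * z - z * C = u) (hu' : C' * z - z * C' = u')
    (hP : P * z - z * P = p) (hQ : Q * z - z * Q = q)
    (h : (C * u' - u' * C) - (C' * u - u * C') - p + q = 0) :
    (C * C' - C' * C - P + Q) * z = z * (C * C' - C' * C - P + Q) := by
  have expand : (C * C' - C' * C - P + Q) * z - z * (C * C' - C' * C - P + Q)
      = (C * (C' * z - z * C') - (C' * z - z * C') * C)
        - (C' * (C * z - z * C) - (C * z - z * C) * C')
        - (P * z - z * P) + (Q * z - z * Q) := by noncomm_ring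
  rw [hu, hu', hP, hQ] at expand
  rw [← sub_eq_zero, expand, h]

/-- For all α, β, α', β' ∈ I, the element
`M := [N_{αβ}, N_{α'β'}] − δ_{β,α'} N_{αβ'} + δ_{α,β'} N_{α'β}`
commutes with every element of the subalgebra of `A` generated by
`{b_μ : μ ∈ I} ∪ {b†_μ : μ ∈ I}`. -/
theorem quon_M_commutes_with_generated_subalgebra
    {A : Type*} [Ring A] [Algebra ℝ A] {I : Type*} [DecidableEq I]
    (b bd : I → A) (N : I → I → A)
    (hNbd : ∀ α β μ : I, N α β * bd μ - bd μ * N α β = if β = μ then bd α else 0)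
    (hNb : ∀ α β μ : I, N α β * b μ - b μ * N α β = -(if α = μ then b β else 0))
    (α β α' β' : I) :
    let M := (N α β * N α' β' - N α' β' * N α β)
      - (if β = α' then N α β' else 0) + (if α = β' then N α' β else 0)
    ∀ x ∈ Algebra.adjoin ℝ (Set.range b ∪ Set.range bd), M * x = x * M := by
  intro M
  have hgen : ∀ g ∈ Set.range b ∪ Set.range bd, M * g = g * M := by
    rintro g (⟨μ, rfl⟩ | ⟨μ, rfl⟩)
    · -- b μ case
      have hP : (if β = α' then N α β' else 0) * b μ - b μ * (if β = α' then N α β' else 0)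
          = if β = α' then -(if α = μ then b β' else 0) else 0 := by
        by_cases h : β = α'
        · simp only [if_pos h]; exact hNb α β' μ
        · simp [if_neg h]
      have hQ : (if α = β' then N α' β else 0) * b μ - b μ * (if α = β' then N α' β else 0)
          = if α = β' then -(if α' = μ then b β else 0) else 0 := by
        by_cases h : α = β'
        · simp only [if_pos h]; exact hNb α' β μ
        · simp [if_neg h]
      apply quon_aux (N α β) (N α' β') _ _ (b μ)
        (-(if α = μ then b β else 0)) (-(if α' = μ then b β' else 0))
        (if β = α' then -(if α = μ then b β' else 0) else 0)
        (if α = β' then -(if α' = μ then b β else 0) else 0)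
        (hNb α β μ) (hNb α' β' μ) hP hQ
      have A1 : N α β * -(if α' = μ then b β' else 0) - -(if α' = μ then b β' else 0) * N α β
          = if α' = μ then -(-(if α = β' then b β else 0)) else 0 := by
        by_cases h : α' = μ
        · simp only [if_pos h, mul_neg, neg_mul, neg_sub_neg]
          rw [← neg_sub]; rw [hNb α β β']
        · simp [if_neg h]
      have A2 : N α' β' * -(if α = μ then b β else 0) - -(if α = μ then b β else 0) * N α' β'
          = if α = μ then -(-(if β = α' then b β' else 0)) else 0 := by
        by_cases h : α = μ
        · simp only [if_pos h, mul_neg, neg_mul, neg_sub_neg]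
          rw [← neg_sub]; rw [hNb α' β' β]
          simp [eq_comm]
        · simp [if_neg h]
      rw [A1, A2]
      split_ifs <;> (try simp only [neg_neg, neg_zero, sub_zero, zero_sub, add_zero, sub_self]) <;> abel
    · -- bd μ case
      have hP : (if β = α' then N α β' else 0) * bd μ - bd μ * (if β = α' then N α β' else 0)
          = if β = α' then (if β' = μ then bd α else 0) else 0 := by
        by_cases h : β = α'
        · simp only [if_pos h]; exact hNbd α β' μ
        · simp [if_neg h]
      have hQ : (if α = β' then N α' β else 0) * bd μ - bd μ * (if α = β' then N α' β else 0)
          = if α = β' then (if β = μ then bd α' else 0) else 0 := by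
        by_cases h : α = β'
        · simp only [if_pos h]; exact hNbd α' β μ
        · simp [if_neg h]
      apply quon_aux (N α β) (N α' β') _ _ (bd μ)
        (if β = μ then bd α else 0) (if β' = μ then bd α' else 0)
        (if β = α' then (if β' = μ then bd α else 0) else 0)
        (if α = β' then (if β = μ then bd α' else 0) else 0)
        (hNbd α β μ) (hNbd α' β' μ) hP hQ
      have A1 : N α β * (if β' = μ then bd α' else 0) - (if β' = μ then bd α' else 0) * N α β
          = if β' = μ then (if β = α' then bd α else 0) else 0 := by
        by_cases h : β' = μ
        · simp only [if_pos h]; exact hNbd α β α'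
        · simp [if_neg h]
      have A2 : N α' β' * (if β = μ then bd α else 0) - (if β = μ then bd α else 0) * N α' β'
          = if β = μ then (if α = β' then bd α' else 0) else 0 := by
        by_cases h : β = μ
        · simp only [if_pos h]; rw [hNbd α' β' α]; simp [eq_comm]
        · simp [if_neg h]
      rw [A1, A2]
      split_ifs <;> (try simp only [neg_neg, neg_zero, sub_zero, zero_sub, add_zero, sub_self]) <;> abel
  clear_value M
  intro x hx
  induction hx using Algebra.adjoin_induction with
  | mem g hg => exact hgen g hg
  | algebraMap r => exact (Algebra.commutes r M).symm
  | add x y hx hy ihx ihy => rw [mul_add, add_mul, ihx, ihy]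
  | mul x y hx hy ihx ihy => rw [← mul_assoc, ihx, mul_assoc, ihy, mul_assoc]
end

section
/- The triple (e, f, h) = (J_+, J_−, 2 J_0) is an sl₂-triple in A regarded as a Lie algebra under the commutator bracket; that is, [h, e] = 2e, [h, f] = −2f, and [e, f] = h. Consequently the operators J_0, J_+, J_− built from the quon transition number operators generate a representation of the Lie algebra su(2) (equivalently, sl₂). -/
/-- With `j = n/2` a nonnegative half-integer, the index set `I = {−j, …, j}` is modeled by
`Fin (n+1)`, the element `m : Fin (n+1)` corresponding to the projection value
`ν m = m − j`. -/
noncomputable def nuProj (n : ℕ) (m : Fin (n + 1)) : ℝ := (m : ℝ) - (n : ℝ) / 2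

/-- `J₀ = Σ_{ν ∈ I} ν N_{νν}`. -/
noncomputable def J0 {A : Type*} [Ring A] [Algebra ℝ A] (n : ℕ)
    (N : Fin (n + 1) → Fin (n + 1) → A) : A :=
  ∑ m : Fin (n + 1), nuProj n m • N m m

/-- `J₊ = Σ_{ν ∈ I, ν < j} √((j−ν)(j+ν+1)) N_{ν+1, ν}`. -/
noncomputable def Jp {A : Type*} [Ring A] [Algebra ℝ A] (n : ℕ)
    (N : Fin (n + 1) → Fin (n + 1) → A) : A :=
  ∑ m : Fin n,
    Real.sqrt (((n : ℝ) / 2 - nuProj n m.castSucc) * ((n : ℝ) / 2 + nuProj n m.castSucc + 1)) •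
      N m.succ m.castSucc

/-- `J₋ = Σ_{ν ∈ I, ν > −j} √((j+ν)(j−ν+1)) N_{ν−1, ν}`. -/
noncomputable def Jm {A : Type*} [Ring A] [Algebra ℝ A] (n : ℕ)
    (N : Fin (n + 1) → Fin (n + 1) → A) : A :=
  ∑ m : Fin n,
    Real.sqrt (((n : ℝ) / 2 + nuProj n m.succ) * ((n : ℝ) / 2 - nuProj n m.succ + 1)) •
      N m.castSucc m.succ


section helpers
variable {A : Type*} [Ring A] [Algebra ℝ A]

lemma sum_lie' {ι : Type*} (s : Finset ι) (g : ι → A) (y : A) :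
    ⁅∑ i ∈ s, g i, y⁆ = ∑ i ∈ s, ⁅g i, y⁆ := by
  simp only [Ring.lie_def, Finset.sum_mul, Finset.mul_sum, Finset.sum_sub_distrib]

lemma lie_sum' {ι : Type*} (s : Finset ι) (g : ι → A) (y : A) :
    ⁅y, ∑ i ∈ s, g i⁆ = ∑ i ∈ s, ⁅y, g i⁆ := by
  simp only [Ring.lie_def, Finset.sum_mul, Finset.mul_sum, Finset.sum_sub_distrib]

lemma smul_lie' (t : ℝ) (x y : A) : ⁅t • x, y⁆ = t • ⁅x, y⁆ := by
  simp only [Ring.lie_def, smul_mul_assoc, mul_smul_comm, smul_sub]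

lemma lie_smul' (t : ℝ) (x y : A) : ⁅x, t • y⁆ = t • ⁅x, y⁆ := by
  simp only [Ring.lie_def, smul_mul_assoc, mul_smul_comm, smul_sub]

end helpers

lemma nuProj_succ (n : ℕ) (k : Fin n) :
    nuProj n k.succ = nuProj n k.castSucc + 1 := by
  simp [nuProj, Fin.val_succ, Fin.coe_castSucc]
  push_cast; ring

/-- The triple `(e, f, h) = (J₊, J₋, 2 J₀)` is an sl₂-triple in `A`
regarded as a Lie ring under the commutator bracket `⁅x, y⁆ = x*y − y*x`:
`[h, e] = 2e`, `[h, f] = −2f`, and `[e, f] = h`.  Hence the operators `J₀, J₊, J₋` built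
from the quon transition number operators generate a representation of `su(2)` (≃ `sl₂`). -/
theorem quon_sl2_triple
    {A : Type*} [Ring A] [Algebra ℝ A] (n : ℕ)
    (N : Fin (n + 1) → Fin (n + 1) → A)
    (hNN : ∀ α β α' β' : Fin (n + 1),
      N α β * N α' β' - N α' β' * N α β =
        (if β = α' then N α β' else 0) - (if α = β' then N α' β else 0)) :
    let e : A := Jp n N
    let f : A := Jm n N
    let h : A := (2 : ℝ) • J0 n N
    ⁅h, e⁆ = 2 • e ∧ ⁅h, f⁆ = -(2 • f) ∧ ⁅e, f⁆ = h := by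
  intro e f h
  have hbr : ∀ α β α' β' : Fin (n + 1),
      ⁅N α β, N α' β'⁆ =
        (if β = α' then N α β' else 0) - (if α = β' then N α' β else 0) := by
    intro α β α' β'
    rw [Ring.lie_def]; exact hNN α β α' β'
  -- coefficient abbreviations
  set c : Fin n → ℝ := fun k =>
    Real.sqrt (((n : ℝ) / 2 - nuProj n k.castSucc) * ((n : ℝ) / 2 + nuProj n k.castSucc + 1))
    with hc
  set d : Fin n → ℝ := fun k =>
    Real.sqrt (((n : ℝ) / 2 + nuProj n k.succ) * ((n : ℝ) / 2 - nuProj n k.succ + 1))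
    with hd
  have hcd : ∀ k : Fin n, c k * d k = ((n : ℝ) - k) * (k + 1) := by
    intro k
    have h1 : ((n : ℝ) / 2 - nuProj n k.castSucc) * ((n : ℝ) / 2 + nuProj n k.castSucc + 1)
        = ((n : ℝ) - k) * (k + 1) := by
      simp only [nuProj, Fin.coe_castSucc]; ring
    have h2 : ((n : ℝ) / 2 + nuProj n k.succ) * ((n : ℝ) / 2 - nuProj n k.succ + 1)
        = ((n : ℝ) - k) * (k + 1) := by
      simp only [nuProj, Fin.val_succ]; push_cast; ring
    have hnonneg : (0:ℝ) ≤ ((n : ℝ) - k) * (k + 1) := by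
      have hk : (k : ℝ) ≤ n := by
        have := k.isLt; exact_mod_cast le_of_lt (lt_of_lt_of_le this (Nat.le_refl n))
      have : (0:ℝ) ≤ (n:ℝ) - k := by linarith
      positivity
    rw [hc, hd]; simp only [h1, h2]
    exact Real.mul_self_sqrt hnonneg
  -- [h, e] = 2e and [h, f] = -2f
  have key : ∀ (a b : Fin n → Fin (n+1)),
      ∀ k : Fin n, ⁅h, N (a k) (b k)⁆ =
        ((2:ℝ) * (nuProj n (a k) - nuProj n (b k))) • N (a k) (b k) := by
    intro a b k
    show ⁅(2:ℝ) • J0 n N, N (a k) (b k)⁆ = _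
    rw [smul_lie', J0, sum_lie']
    have : ∀ m : Fin (n+1), ⁅nuProj n m • N m m, N (a k) (b k)⁆ =
        (if m = a k then (nuProj n m) • N m (b k) else 0)
        - (if m = b k then (nuProj n m) • N (a k) m else 0) := by
      intro m
      rw [smul_lie', hbr]
      rw [smul_sub]
      congr 1 <;> [skip; skip] <;>
        · split_ifs with hh <;> simp [hh]
    rw [Finset.sum_congr rfl fun m _ => this m, Finset.sum_sub_distrib]
    rw [Finset.sum_ite_eq' Finset.univ (a k), Finset.sum_ite_eq' Finset.univ (b k)]
    simp only [Finset.mem_univ, if_true]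
    rw [← sub_smul, smul_smul]
  refine ⟨?_, ?_, ?_⟩
  · show ⁅h, Jp n N⁆ = 2 • Jp n N
    rw [Jp, lie_sum']
    rw [show (2 • ∑ k : Fin n, c k • N k.succ k.castSucc : A)
        = ∑ k : Fin n, 2 • (c k • N k.succ k.castSucc) from (Finset.smul_sum)]
    apply Finset.sum_congr rfl
    intro k _
    rw [lie_smul', key (fun x => x.succ) (fun x => x.castSucc) k]
    have : (2:ℝ) * (nuProj n k.succ - nuProj n k.castSucc) = 2 := by
      rw [nuProj_succ]; ring
    rw [this, smul_comm]
    simp [two_smul, hc]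
  · show ⁅h, Jm n N⁆ = -(2 • Jm n N)
    rw [Jm, lie_sum']
    rw [show (-(2 • ∑ k : Fin n, d k • N k.castSucc k.succ) : A)
        = ∑ k : Fin n, -(2 • (d k • N k.castSucc k.succ)) by
      rw [Finset.smul_sum, Finset.sum_neg_distrib]]
    apply Finset.sum_congr rfl
    intro k _
    rw [lie_smul', key (fun x => x.castSucc) (fun x => x.succ) k]
    have : (2:ℝ) * (nuProj n k.castSucc - nuProj n k.succ) = -2 := by
      rw [nuProj_succ]; ring
    rw [this, smul_comm, neg_smul]
    congr 1
    simp [two_smul, hd]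
  · show ⁅Jp n N, Jm n N⁆ = (2:ℝ) • J0 n N
    rw [Jp, Jm, sum_lie']
    have step1 : ∀ k : Fin n, ⁅c k • N k.succ k.castSucc, ∑ l : Fin n, d l • N l.castSucc l.succ⁆
        = (c k * d k) • (N k.succ k.succ - N k.castSucc k.castSucc) := by
      intro k
      rw [lie_sum']
      have : ∀ l : Fin n, ⁅c k • N k.succ k.castSucc, d l • N l.castSucc l.succ⁆
          = if l = k then (c k * d k) • (N k.succ k.succ - N k.castSucc k.castSucc) else 0 := by
        intro l
        rw [smul_lie', lie_smul', hbr]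
        rcases eq_or_ne l k with rfl | hlk
        · simp [Fin.succ_inj, Fin.castSucc_inj, smul_sub, smul_smul, mul_comm]
        · have h1 : k.castSucc ≠ l.castSucc := by
            simp [Fin.castSucc_inj]; exact fun hh => hlk hh.symm
          have h2 : k.succ ≠ l.succ := by
            simp [Fin.succ_inj]; exact fun hh => hlk hh.symm
          simp [h1, h2, hlk]
      rw [Finset.sum_congr rfl fun l _ => this l, Finset.sum_ite_eq' Finset.univ k]
      simp
    rw [Finset.sum_congr rfl fun k _ => step1 k]
    -- telescoping
    rw [J0, Finset.smul_sum]
    have coefft : ∀ m : Fin (n+1), (2:ℝ) • (nuProj n m • N m m)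
        = (((n:ℝ)+1-m)*m) • N m m - (((n:ℝ)-m)*(m+1)) • N m m := by
      intro m
      rw [smul_smul, ← sub_smul]
      congr 1
      simp [nuProj]; ring
    rw [Finset.sum_congr rfl fun m _ => coefft m, Finset.sum_sub_distrib]
    simp only [smul_sub, Finset.sum_sub_distrib]
    congr 1
    · rw [Fin.sum_univ_succ (f := fun m : Fin (n+1) => (((n:ℝ)+1-m)*m) • N m m)]
      simp only [Fin.val_zero, Nat.cast_zero, mul_zero, zero_smul, zero_add]
      apply Finset.sum_congr rfl
      intro k _
      rw [hcd]
      congr 1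
      push_cast [Fin.val_succ]
      ring
    · rw [Fin.sum_univ_castSucc (f := fun m : Fin (n+1) => (((n:ℝ)-m)*(m+1)) • N m m)]
      simp only [Fin.val_last, sub_self, zero_mul, zero_smul, add_zero]
      apply Finset.sum_congr rfl
      intro k _
      rw [hcd]
      congr 1
end
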